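/- Let T, T̂ be monotone convex operators on an ordered Banach function space with common extension such that T̂f = T(η̂ + f) − βκ_{η̂} for a fixed function η̂ and constant-in-f correction βκ_{η̂}, and let v, v̂ satisfy Tv = v and T̂v̂ = v̂. Suppose the subgradients D_{η̂+v} and D_{η̂+v̂} are monotone bounded linear operators with spectral radius less than 1, so (I − D_{η̂+v})^{−1} and (I − D_{η̂+v̂})^{−1} exist and are monotone. Then the two-sided sandwich bound holds: (I − D_{η̂+v̂})^{−1}(T̂v − v) ≥ v̂ − v ≥ (I − D_{η̂+v})^{−1}(T̂v − v), and consequently ‖v̂ − v‖ ≤ ‖(I − D_{η̂+v})^{−1}(T̂v − v)‖ + ‖(I − D_{η̂+v̂})^{−1}(T̂v − v)‖ in any lattice norm. -/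

import Mathlib

/-!
Substituting `T̂ = T (η̂ + ·) − κ` makes `D₁` and `D₂` subgradients of `T̂` at `v` and `v̂`.
At `v` this gives `(I − D₁)(v̂ − v) ≥ T̂v − v = (I − D₁)w₁`, at `v̂` it gives
`(I − D₂)(v̂ − v) ≤ T̂v − v = (I − D₂)w₂`, so both bounds follow once `(I − D)⁻¹` is positive for
every positive `D` with `ρ(D) < 1`; the norm bound is then solidity of the norm.

Positivity of `(I − D)⁻¹` comes from continuation along the resolvent `t ↦ (t − D)⁻¹`, `t ≥ 1`: for
`t > ‖D‖` it is a positive Neumann series, positivity at `μ` propagates to `λ` slightly below `μ` by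
another Neumann series, and positivity is a closed condition. Only the real spectral radius is
assumed, so the series `∑ Dⁿ` itself need not converge.
-/

open Filter Topology Set spectrum Function

lemma nonneg_of_two_pow_nsmul_nonneg {α : Type*} [AddCommGroup α] [Lattice α]
    [IsOrderedAddMonoid α] {w : α} : ∀ {k : ℕ}, 0 ≤ 2 ^ k • w → 0 ≤ w
  | 0, h => by simpa using h
  | k + 1, h => nonneg_of_two_pow_nsmul_nonneg (k := k) <|
      nsmul_two_semiclosed (by rwa [pow_succ, mul_nsmul] at h)

lemma continuousOn_resolvent {𝕜 A : Type*} [NontriviallyNormedField 𝕜] [NormedRing A]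
    [NormedAlgebra 𝕜 A] [CompleteSpace A] (a : A) : ContinuousOn (resolvent a) (resolventSet 𝕜 a) :=
  fun _ hk => (hasDerivAt_resolvent_const_left hk).continuousAt.continuousWithinAt

section SolidNorm

variable {E : Type*} [NormedAddCommGroup E] [Lattice E] [HasSolidNorm E] [IsOrderedAddMonoid E]

lemma norm_le_add_of_le_of_le {a b c : E} (hab : a ≤ b) (hbc : b ≤ c) : ‖b‖ ≤ ‖a‖ + ‖c‖ := by
  have habs : |b| ≤ |a| ⊔ |c| :=
    abs_le'.2 ⟨hbc.trans ((le_abs_self c).trans le_sup_right),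
      (neg_le_neg hab).trans ((neg_le_abs a).trans le_sup_left)⟩
  calc ‖b‖ ≤ ‖|a| ⊔ |c|‖ :=
        HasSolidNorm.solid (by rwa [abs_of_nonneg (le_sup_of_le_left (abs_nonneg a))])
    _ ≤ ‖|a|‖ + ‖|c|‖ := norm_sup_le_add _ _
    _ = ‖a‖ + ‖c‖ := by rw [norm_abs_eq_norm, norm_abs_eq_norm]

variable [NormedSpace ℝ E]

-- The positive cone is closed, and it contains `(⌊c 2ᵏ⌋ / 2ᵏ) • z` because `0 ≤ 2 • a → 0 ≤ a`
-- holds in any lattice-ordered group.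
instance HasSolidNorm.posSMulMono : PosSMulMono ℝ E :=
  PosSMulMono.of_smul_nonneg fun c hc z hz => by
    have hdyadic : ∀ k : ℕ, 0 ≤ ((⌊c * 2 ^ k⌋₊ : ℝ) / 2 ^ k) • z := fun k =>
      nonneg_of_two_pow_nsmul_nonneg (k := k) <| by
        rw [← Nat.cast_smul_eq_nsmul ℝ, smul_smul, Nat.cast_pow, Nat.cast_ofNat,
          mul_div_cancel₀ _ (by positivity), Nat.cast_smul_eq_nsmul]
        exact nsmul_nonneg hz _
    have hlim : Tendsto (fun k : ℕ => ((⌊c * 2 ^ k⌋₊ : ℝ) / 2 ^ k) • z) atTop (𝓝 (c • z)) :=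
      ((tendsto_nat_floor_mul_div_atTop hc).comp
        (tendsto_pow_atTop_atTop_of_one_lt one_lt_two)).smul_const z
    exact ge_of_tendsto' hlim hdyadic

end SolidNorm

section PositiveOperators

variable {E : Type*} [NormedAddCommGroup E] [NormedSpace ℝ E] [Preorder E]

def PreservesNonneg (S : E →L[ℝ] E) : Prop := ∀ x, 0 ≤ x → 0 ≤ S x

namespace PreservesNonneg

variable {S S' : E →L[ℝ] E}

lemma one : PreservesNonneg (1 : E →L[ℝ] E) := fun _ hx => hx

lemma mul (hS : PreservesNonneg S) (hS' : PreservesNonneg S') : PreservesNonneg (S * S') :=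
  fun x hx => hS _ (hS' x hx)

lemma pow (hS : PreservesNonneg S) : ∀ n : ℕ, PreservesNonneg (S ^ n)
  | 0 => one
  | n + 1 => by rw [pow_succ]; exact (hS.pow n).mul hS

lemma smul [PosSMulMono ℝ E] (hS : PreservesNonneg S) {c : ℝ} (hc : 0 ≤ c) :
    PreservesNonneg (c • S) :=
  fun x hx => smul_nonneg hc (hS x hx)

lemma isClosed_setOf [ClosedIciTopology E] : IsClosed {S : E →L[ℝ] E | PreservesNonneg S} := by
  simp only [PreservesNonneg, ofPred_forall]
  exact isClosed_iInter fun x => isClosed_iInter fun _ =>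
    isClosed_Ici.preimage (ContinuousLinearMap.apply ℝ E x).continuous

lemma inverse_one_sub [ClosedIciTopology E] [AddLeftMono E] [CompleteSpace E]
    (hS : PreservesNonneg S) (h : ‖S‖ < 1) : PreservesNonneg (Ring.inverse (1 - S)) := by
  rw [NormedRing.inverse_one_sub S h]
  exact isClosed_setOf.mem_of_tendsto (summable_geometric_of_norm_lt_one h).hasSum
    (Eventually.of_forall fun n => Finset.sum_induction _ PreservesNonneg
      (fun _ _ hA hB x hx => add_nonneg (hA x hx) (hB x hx)) (fun _ _ => le_rfl)
      fun n _ => hS.pow n)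

end PreservesNonneg

def IsSubgradient (D : E →L[ℝ] E) (F : E → E) (x : E) : Prop := ∀ g, D (g - x) ≤ F g - F x

lemma IsSubgradient.comp_add_sub {D : E →L[ℝ] E} {T : E → E} {η x : E}
    (h : IsSubgradient D T (η + x)) (κ : E) : IsSubgradient D (fun f => T (η + f) - κ) x :=
  fun g => by simpa [add_sub_add_left_eq_sub] using h (η + g)

variable [ClosedIciTopology E] [AddLeftMono E] [PosSMulMono ℝ E] [CompleteSpace E]
  {D : E →L[ℝ] E}

lemma preservesNonneg_resolvent_of_norm_lt (hD : PreservesNonneg D) {t : ℝ} (ht : ‖D‖ < t) :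
    PreservesNonneg (resolvent D t) := by
  have ht0 : 0 < t := (norm_nonneg D).trans_lt ht
  have hnorm : ‖t⁻¹ • D‖ < 1 := by
    rw [norm_smul, Real.norm_of_nonneg (inv_nonneg.2 ht0.le), inv_mul_lt_one₀ ht0]
    exact ht
  have heq : resolvent D t = t⁻¹ • Ring.inverse (1 - t⁻¹ • D) := by
    have := units_smul_resolvent_self (r := Units.mk0 t ht0.ne') (a := D)
    simp only [Units.smul_def, Units.val_mk0, Units.val_inv_eq_inv_val, resolvent, map_one] at this
    rw [← this, resolvent, smul_smul, inv_mul_cancel₀ ht0.ne', one_smul]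
  rw [heq]
  exact ((hD.smul (inv_nonneg.2 ht0.le)).inverse_one_sub hnorm).smul (inv_nonneg.2 ht0.le)

-- `λ - D = (μ - D) (1 - (μ - λ) (μ - D)⁻¹)`, and the second factor has a positive Neumann series.
lemma preservesNonneg_resolvent_of_le {μ lam : ℝ} (hμ : μ ∈ resolventSet ℝ D)
    (hRμ : PreservesNonneg (resolvent D μ)) (hle : lam ≤ μ)
    (hsmall : (μ - lam) * ‖resolvent D μ‖ < 1) : PreservesNonneg (resolvent D lam) := by
  set R := resolvent D μ
  set A := algebraMap ℝ (E →L[ℝ] E) μ - D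
  have hAR : A * R = 1 := Ring.mul_inverse_cancel _ hμ
  have hRA : R * A = 1 := Ring.inverse_mul_cancel _ hμ
  have hnorm : ‖(μ - lam) • R‖ < 1 := by
    rwa [norm_smul, Real.norm_of_nonneg (sub_nonneg.2 hle)]
  have hfactor : algebraMap ℝ (E →L[ℝ] E) lam - D = A * (1 - (μ - lam) • R) := by
    rw [mul_sub, mul_one, mul_smul_comm, hAR]
    simp only [A, Algebra.algebraMap_eq_smul_one, sub_smul]
    abel
  have hcomm : Commute A (1 - (μ - lam) • R) := by
    simp only [Commute, SemiconjBy, mul_sub, sub_mul, mul_one, one_mul, mul_smul_comm,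
      smul_mul_assoc, hAR, hRA]
  rw [resolvent, hfactor, Ring.mul_inverse_rev' hcomm]
  exact ((hRμ.smul (sub_nonneg.2 hle)).inverse_one_sub hnorm).mul hRμ

lemma preservesNonneg_resolvent (hD : PreservesNonneg D) {a : ℝ} (ha : Ici a ⊆ resolventSet ℝ D)
    {t : ℝ} (ht : a ≤ t) : PreservesNonneg (resolvent D t) := by
  set b := max t (‖D‖ + 1)
  set s := {u : ℝ | PreservesNonneg (resolvent D u)}
  have hcont : ContinuousOn (resolvent D) (Icc a b) :=
    (continuousOn_resolvent D).mono (Icc_subset_Ici_self.trans ha)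
  have hclosed : IsClosed (s ∩ Icc a b) := by
    rw [inter_comm]
    exact hcont.preimage_isClosed_of_isClosed isClosed_Icc PreservesNonneg.isClosed_setOf
  have hb : b ∈ s := preservesNonneg_resolvent_of_norm_lt hD (by simp [b])
  refine hclosed.Icc_subset_of_forall_exists_lt hb (fun x hx y hy => ?_) ⟨ht, le_max_left _ _⟩
  set δ := (‖resolvent D x‖ + 1)⁻¹
  have hδ : 0 < δ := by positivity
  refine ⟨max y (x - δ), preservesNonneg_resolvent_of_le (ha hx.2.1.le) hx.1
    (max_le hy.le (by linarith)) ?_, le_max_left _ _, max_lt hy (by linarith)⟩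
  calc (x - max y (x - δ)) * ‖resolvent D x‖ ≤ δ * ‖resolvent D x‖ := by
        gcongr; linarith [le_max_right y (x - δ)]
    _ < 1 := by
        rw [inv_mul_lt_one₀ (by positivity)]
        linarith

lemma le_of_sub_apply_le_sub_apply (hD : PreservesNonneg D) (hρ : spectralRadius ℝ D < 1)
    {x y : E} (h : x - D x ≤ y - D y) : x ≤ y := by
  have hres : Ici (1 : ℝ) ⊆ resolventSet ℝ D := fun t (ht : 1 ≤ t) =>
    mem_resolventSet_of_spectralRadius_lt <| hρ.trans_le <| by
      rw [ENNReal.one_le_coe_iff, ← NNReal.coe_le_coe, coe_nnnorm, NNReal.coe_one,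
        Real.norm_of_nonneg (zero_le_one.trans ht)]
      exact ht
  have hinv : resolvent D (1 : ℝ) * (1 - D) = 1 := by
    simpa [resolvent] using Ring.inverse_mul_cancel _ (hres (mem_Ici.2 le_rfl))
  have hdiff : (y - D y) - (x - D x) = (1 - D) (y - x) := by
    simp [map_sub]
  rw [← sub_nonneg]
  calc 0 ≤ resolvent D (1 : ℝ) ((y - D y) - (x - D x)) :=
        preservesNonneg_resolvent hD hres le_rfl _ (sub_nonneg.2 h)
    _ = (resolvent D (1 : ℝ) * (1 - D)) (y - x) := by rw [hdiff]; rfl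
    _ = y - x := by rw [hinv]; rfl

namespace IsSubgradient

variable {F : E → E} {x y w : E}

lemma le_sub_of_isFixedPt (hsub : IsSubgradient D F x) (hD : PreservesNonneg D)
    (hρ : spectralRadius ℝ D < 1) (hy : IsFixedPt F y) (hw : w - D w = F x - x) : w ≤ y - x := by
  refine le_of_sub_apply_le_sub_apply hD hρ ?_
  calc w - D w = (y - x) - (y - F x) := by rw [hw]; abel
    _ ≤ (y - x) - D (y - x) := by
        gcongr
        simpa [hy.eq] using hsub y

lemma sub_le_of_isFixedPt (hsub : IsSubgradient D F y) (hD : PreservesNonneg D)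
    (hρ : spectralRadius ℝ D < 1) (hy : IsFixedPt F y) (hw : w - D w = F x - x) : y - x ≤ w := by
  refine le_of_sub_apply_le_sub_apply hD hρ ?_
  calc (y - x) - D (y - x) = (y - x) + D (x - y) := by rw [sub_eq_add_neg, ← map_neg, neg_sub]
    _ ≤ (y - x) + (F x - y) := by
        gcongr
        simpa [hy.eq] using hsub x
    _ = w - D w := by rw [hw]; abel

end IsSubgradient

end PositiveOperators

theorem stmt12_general {E : Type*} [NormedAddCommGroup E] [Lattice E] [HasSolidNorm E]
    [IsOrderedAddMonoid E] [NormedSpace ℝ E]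
    [CompleteSpace E]
    (T That : E → E) (ηhat κ : E)
    (hrel : ∀ f, That f = T (ηhat + f) - κ)
    (v vhat : E) (hvhat : That vhat = vhat)
    (D1 D2 : E →L[ℝ] E)
    (hD1pos : ∀ f : E, 0 ≤ f → 0 ≤ D1 f)
    (hD2pos : ∀ f : E, 0 ≤ f → 0 ≤ D2 f)
    (hD1sub : ∀ g : E, D1 (g - (ηhat + v)) ≤ T g - T (ηhat + v))
    (hD2sub : ∀ g : E, D2 (g - (ηhat + vhat)) ≤ T g - T (ηhat + vhat))
    (hρ1 : spectralRadius ℝ D1 < 1) (hρ2 : spectralRadius ℝ D2 < 1) :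
    ∀ w₁ w₂ : E, w₁ - D1 w₁ = That v - v → w₂ - D2 w₂ = That v - v →
      w₁ ≤ vhat - v ∧ vhat - v ≤ w₂ ∧ ‖vhat - v‖ ≤ ‖w₁‖ + ‖w₂‖ := by
  intro w₁ w₂ hw₁ hw₂
  obtain rfl : That = fun f => T (ηhat + f) - κ := funext hrel
  have hlower : w₁ ≤ vhat - v :=
    (IsSubgradient.comp_add_sub hD1sub κ).le_sub_of_isFixedPt hD1pos hρ1 hvhat hw₁
  have hupper : vhat - v ≤ w₂ :=
    (IsSubgradient.comp_add_sub hD2sub κ).sub_le_of_isFixedPt hD2pos hρ2 hvhat hw₂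
  exact ⟨hlower, hupper, norm_le_add_of_le_of_le hlower hupper⟩

/-- Two-sided sandwich bound for fixed points of a perturbed monotone convex operator.
If `T̂f = T(η̂ + f) − κ` with `Tv = v` and `T̂v̂ = v̂`, and `D₁`, `D₂` are monotone
bounded linear subgradients of `T` at `η̂ + v` and `η̂ + v̂` with spectral radius `< 1`,
then with `w₁ = (I − D₁)⁻¹(T̂v − v)` and `w₂ = (I − D₂)⁻¹(T̂v − v)` one has
`w₁ ≤ v̂ − v ≤ w₂`, and hence `‖v̂ − v‖ ≤ ‖w₁‖ + ‖w₂‖` in the lattice norm. -/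
theorem stmt12 {E : Type*} [NormedAddCommGroup E] [Lattice E] [HasSolidNorm E]
    [IsOrderedAddMonoid E] [NormedSpace ℝ E]
    [CompleteSpace E]
    (T That : E → E) (ηhat κ : E)
    (hrel : ∀ f, That f = T (ηhat + f) - κ)
    (hTmono : ∀ f g : E, f ≤ g → T f ≤ T g)
    (hTconv : ∀ f g : E, ∀ τ : ℝ, 0 ≤ τ → τ ≤ 1 →
      T (τ • f + (1 - τ) • g) ≤ τ • T f + (1 - τ) • T g)
    (v vhat : E) (hv : T v = v) (hvhat : That vhat = vhat)
    (D1 D2 : E →L[ℝ] E)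
    (hD1pos : ∀ f : E, 0 ≤ f → 0 ≤ D1 f)
    (hD2pos : ∀ f : E, 0 ≤ f → 0 ≤ D2 f)
    (hD1sub : ∀ g : E, D1 (g - (ηhat + v)) ≤ T g - T (ηhat + v))
    (hD2sub : ∀ g : E, D2 (g - (ηhat + vhat)) ≤ T g - T (ηhat + vhat))
    (hρ1 : spectralRadius ℝ D1 < 1) (hρ2 : spectralRadius ℝ D2 < 1) :
    ∀ w₁ w₂ : E, w₁ - D1 w₁ = That v - v → w₂ - D2 w₂ = That v - v →
      w₁ ≤ vhat - v ∧ vhat - v ≤ w₂ ∧ ‖vhat - v‖ ≤ ‖w₁‖ + ‖w₂‖ :=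
  stmt12_general T That ηhat κ hrel v vhat hvhat D1 D2 hD1pos hD2pos hD1sub hD2sub hρ1 hρ2
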